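/- Let (S(i)) be the Bernoulli(p) random walk, a < b integers, τ_{a,b} the first time ≥ 1 the walk is in {a,b}. For x, y ∈ (a,b): P_x{S(j) = y, j ≤ τ_{a,b}} = ∑_{l∈ℤ} (p/q)^{l(b-a)} [P_x{S(j) = y - 2l(b-a)} - (p/q)^{y-a} P_x{S(j) = 2a - 2l(b-a) - y}], where the sum has finitely many nonzero terms. -/
import Mathlib


open Finset

noncomputable section

/-- Step value of the Bernoulli walk: `+1` for `true`, `-1` for `false`. -/
def stepVal (b : Bool) : ℤ := if b then 1 else -1

/-- Position at time `i` of the walk started at `x` with step sequence `ε`. -/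
def walkFn (x : ℤ) (ε : ℕ → Bool) (i : ℕ) : ℤ :=
  x + ∑ k ∈ Finset.range i, stepVal (ε k)

/-- Extend a finite sequence by a default value. -/
def extendF {n : ℕ} {α : Type*} (d : α) (ε : Fin n → α) : ℕ → α :=
  fun k => if h : k < n then ε ⟨k, h⟩ else d

/-- Weight of a single step: `p` for `+1`, `1-p` for `-1`. -/
def wt (p : ℝ) (b : Bool) : ℝ := if b then p else 1 - p

open Classical in
/-- Probability, for the Bernoulli(p) walk started at `x`, of an event `P` on the path,
computed over the horizon `n` (the event should only depend on times `≤ n`). -/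
def walkProb (p : ℝ) (x : ℤ) (n : ℕ) (P : (ℕ → ℤ) → Prop) : ℝ :=
  ∑ ε : Fin n → Bool, if P (walkFn x (extendF false ε)) then ∏ k, wt p (ε k) else 0

end

section aux

lemma walkFn_zero (x : ℤ) (ε : ℕ → Bool) : walkFn x ε 0 = x := by simp [walkFn]

lemma walkFn_cons (x : ℤ) (c : Bool) {n : ℕ} (ε : Fin n → Bool) (i : ℕ) :
    walkFn x (extendF false (Fin.cons c ε : Fin (n+1) → Bool)) i
      = if i = 0 then x else walkFn (x + stepVal c) (extendF false ε) (i - 1) := by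
  cases i with
  | zero => simp [walkFn]
  | succ m =>
    simp only [Nat.succ_ne_zero, if_false, Nat.add_sub_cancel]
    unfold walkFn
    rw [Finset.sum_range_succ']
    have h0 : extendF false (Fin.cons c ε : Fin (n+1) → Bool) 0 = c := by
      simp [extendF]
    have hs : ∀ k, extendF false (Fin.cons c ε : Fin (n+1) → Bool) (k+1)
        = extendF false ε k := by
      intro k
      simp only [extendF]
      by_cases h : k < n
      · rw [dif_pos (by omega : k + 1 < n + 1), dif_pos h]
        have he : (⟨k+1, by omega⟩ : Fin (n+1)) = (⟨k, h⟩ : Fin n).succ := rfl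
        rw [he, Fin.cons_succ]
      · rw [dif_neg (by omega : ¬ (k + 1 < n + 1)), dif_neg h]
    simp only [hs, h0]
    ring

lemma walkProb_congr {p : ℝ} {x : ℤ} {n : ℕ} {P Q : (ℕ → ℤ) → Prop}
    (h : ∀ ε : ℕ → Bool, P (walkFn x ε) ↔ Q (walkFn x ε)) :
    walkProb p x n P = walkProb p x n Q := by
  unfold walkProb
  refine Finset.sum_congr rfl fun ε _ => ?_
  by_cases hP : P (walkFn x (extendF false ε))
  · rw [if_pos hP, if_pos ((h _).1 hP)]
  · rw [if_neg hP, if_neg (fun hQ => hP ((h _).2 hQ))]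

lemma walkProb_zero_of {p : ℝ} {x : ℤ} {n : ℕ} {P : (ℕ → ℤ) → Prop}
    (h : ∀ ε : ℕ → Bool, ¬ P (walkFn x ε)) :
    walkProb p x n P = 0 := by
  unfold walkProb
  refine Finset.sum_eq_zero fun ε _ => if_neg (h _)

lemma walkProb_succ (p : ℝ) (x : ℤ) (n : ℕ) (P : (ℕ → ℤ) → Prop) :
    walkProb p x (n+1) P
      = p * walkProb p (x+1) n (fun S => P (fun i => if i = 0 then x else S (i-1)))
        + (1-p) * walkProb p (x-1) n (fun S => P (fun i => if i = 0 then x else S (i-1))) := by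
  classical
  unfold walkProb
  rw [← (Fin.consEquiv (fun _ : Fin (n+1) => Bool)).sum_comp]
  rw [Fintype.sum_prod_type]
  rw [Fintype.sum_bool]
  have key : ∀ (c : Bool) (ε : Fin n → Bool),
      walkFn x (extendF false ((Fin.consEquiv _) (c, ε)))
        = fun i => if i = 0 then x else walkFn (x + stepVal c) (extendF false ε) (i-1) :=
    fun c ε => funext (walkFn_cons x c ε)
  simp only [key]
  have prodkey : ∀ (c : Bool) (ε : Fin n → Bool),
      (∏ k, wt p ((Fin.consEquiv (fun _ : Fin (n+1) => Bool)) (c, ε) k))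
        = wt p c * ∏ k, wt p (ε k) := by
    intro c ε
    have : (wt p ∘ (Fin.consEquiv (fun _ : Fin (n+1) => Bool)) (c, ε)) = Fin.cons (wt p c) (wt p ∘ ε) := by
      show wt p ∘ Fin.cons c ε = _
      exact Fin.comp_cons (wt p) c ε
    calc (∏ k, wt p ((Fin.consEquiv (fun _ : Fin (n+1) => Bool)) (c, ε) k))
        = ∏ k, (Fin.cons (wt p c) (wt p ∘ ε) : Fin (n+1) → ℝ) k := by rw [← this]; rfl
      _ = wt p c * ∏ k, wt p (ε k) := Fin.prod_cons _ _
  simp only [prodkey, key]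
  have s1 : stepVal true = 1 := rfl
  have s2 : stepVal false = -1 := rfl
  have w1 : wt p true = p := rfl
  have w2 : wt p false = 1 - p := rfl
  simp only [s1, s2, w1, w2, ← sub_eq_add_neg]
  rw [Finset.mul_sum, Finset.mul_sum]
  congr 1 <;>
  · refine Finset.sum_congr rfl fun ε _ => ?_
    split <;> ring

end aux

section refl
variable {p : ℝ}

noncomputable def gP (p : ℝ) (x : ℤ) (n : ℕ) (z : ℤ) : ℝ := walkProb p x n (fun S => S n = z)

def upc {n : ℕ} (ε : Fin n → Bool) : ℕ := (Finset.univ.filter fun k => ε k = true).card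

lemma upc_le {n : ℕ} (ε : Fin n → Bool) : upc ε ≤ n :=
  le_trans (Finset.card_filter_le _ _) (by simp)

lemma prod_wt (p : ℝ) {n : ℕ} (ε : Fin n → Bool) :
    ∏ k, wt p (ε k) = p ^ upc ε * (1-p) ^ (n - upc ε) := by
  have hcard : (Finset.univ.filter fun k => ¬ (ε k = true)).card = n - upc ε := by
    have h2 := Finset.card_filter_add_card_filter_not
      (s := (Finset.univ : Finset (Fin n))) (p := fun k => ε k = true)
    simp only [Finset.card_univ, Fintype.card_fin] at h2
    unfold upc
    omega
  unfold wt
  rw [Finset.prod_ite, Finset.prod_const, Finset.prod_const, hcard]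
  rfl

lemma walk_end (x : ℤ) {n : ℕ} (ε : Fin n → Bool) :
    walkFn x (extendF false ε) n = x + 2 * (upc ε : ℤ) - n := by
  unfold walkFn
  rw [← Fin.sum_univ_eq_sum_range]
  have h : ∀ i : Fin n, stepVal (extendF false ε i) = stepVal (ε i) := by
    intro i
    congr 1
    simp [extendF, i.isLt]
  rw [Finset.sum_congr rfl (fun i _ => h i)]
  unfold stepVal
  rw [Finset.sum_ite, Finset.sum_const, Finset.sum_const]
  have hcard : (Finset.univ.filter fun k => ¬ (ε k = true)).card = n - upc ε := by
    have h2 := Finset.card_filter_add_card_filter_not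
      (s := (Finset.univ : Finset (Fin n))) (p := fun k => ε k = true)
    simp only [Finset.card_univ, Fintype.card_fin] at h2
    unfold upc
    omega
  rw [hcard]
  have := upc_le ε
  show x + ((upc ε : ℤ) • (1:ℤ) + ((n - upc ε : ℕ) : ℤ) • (-1:ℤ)) = _
  simp only [smul_eq_mul, mul_one, mul_neg_one]
  push_cast [Nat.cast_sub this]
  ring

lemma key_pow (hp : 0 < p) (h1 : p < 1) (u d : ℕ) :
    (p/(1-p)) ^ ((u:ℤ) - d) * ((1-p)^u * p^d) = p^u * (1-p)^d := by
  have hq : (0:ℝ) < 1 - p := by linarith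
  have hpq : p/(1-p) ≠ 0 := by positivity
  rw [zpow_sub₀ hpq, zpow_natCast, zpow_natCast, div_pow, div_pow]
  field_simp

lemma flip_invol {n : ℕ} :
    Function.Involutive (fun (ε : Fin n → Bool) => fun k => !(ε k)) := by
  intro ε; funext k; simp

lemma upc_flip {n : ℕ} (ε : Fin n → Bool) :
    upc (fun k => !(ε k)) = n - upc ε := by
  unfold upc
  have : (Finset.univ.filter fun k => (!(ε k)) = true)
      = Finset.univ.filter fun k => ¬ (ε k = true) := by
    apply Finset.filter_congr
    intro k _
    simp
  rw [this]
  have h2 := Finset.card_filter_add_card_filter_not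
    (s := (Finset.univ : Finset (Fin n))) (p := fun k => ε k = true)
  simp only [Finset.card_univ, Fintype.card_fin] at h2
  omega

lemma wt_flip (p : ℝ) (b : Bool) : wt p (!b) = wt (1-p) b := by
  cases b <;> simp [wt]

lemma gP_reflect (hp : 0 < p) (h1 : p < 1) (x z : ℤ) (n : ℕ) :
    gP p x n z = (p/(1-p)) ^ (z - x) * gP p x n (2*x - z) := by
  classical
  unfold gP walkProb
  rw [Finset.mul_sum]
  refine Fintype.sum_bijective (fun (ε : Fin n → Bool) k => !(ε k)) (flip_invol).bijective _ _
    (fun ε => ?_)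
  have hflipwalk : walkFn x (extendF false (fun k => !(ε k))) n = 2*x - walkFn x (extendF false ε) n := by
    rw [walk_end, walk_end, upc_flip]
    have := upc_le ε
    push_cast [Nat.cast_sub this]
    ring
  beta_reduce
  rw [hflipwalk]
  by_cases hw : walkFn x (extendF false ε) n = z
  · rw [if_pos hw, if_pos (by rw [hw])]
    have hprod : (∏ k, wt p ((fun k => !(ε k)) k)) = ∏ k, wt (1-p) (ε k) :=
      Finset.prod_congr rfl fun k _ => wt_flip p (ε k)
    rw [hprod, prod_wt (1-p) ε]
    have hz : z - x = (upc ε : ℤ) - (n - upc ε : ℕ) := by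
      have h := walk_end x ε
      rw [hw] at h
      have := upc_le ε
      push_cast [Nat.cast_sub this]
      omega
    rw [hz]
    have hsimp : (1 : ℝ) - (1 - p) = p := by ring
    rw [hsimp]
    rw [key_pow hp h1]
    rw [prod_wt p ε]
  · rw [if_neg hw, if_neg (by intro h; exact hw (by omega)), mul_zero]

end refl

section basics
variable {p : ℝ}

lemma gP_zero (p : ℝ) (x z : ℤ) : gP p x 0 z = if x = z then 1 else 0 := by
  unfold gP walkProb
  rw [Fintype.sum_subsingleton _ (fun _ : Fin 0 => false)]
  simp [walkFn]

lemma gP_succ (p : ℝ) (x z : ℤ) (n : ℕ) :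
    gP p x (n+1) z = p * gP p (x+1) n z + (1-p) * gP p (x-1) n z := by
  unfold gP
  rw [walkProb_succ p x n (fun S => S (n+1) = z)]
  beta_reduce
  have he : ∀ x' : ℤ, walkProb p x' n (fun S => (if n + 1 = 0 then x else S (n + 1 - 1)) = z)
      = walkProb p x' n (fun S => S n = z) := fun x' => walkProb_congr fun ε => by simp
  rw [he, he]

lemma walkFn_bound (x : ℤ) {n : ℕ} (ε : Fin n → Bool) :
    |walkFn x (extendF false ε) n - x| ≤ n := by
  rw [walk_end]
  have h1 := upc_le ε
  have h2 : (0:ℤ) ≤ (upc ε : ℤ) := Int.natCast_nonneg _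
  have h3 : (upc ε : ℤ) ≤ n := by exact_mod_cast h1
  rw [abs_le]
  constructor <;> omega

lemma gP_small (p : ℝ) (x z : ℤ) (n : ℕ) (h : (n : ℤ) < |z - x|) : gP p x n z = 0 := by
  unfold gP walkProb
  refine Finset.sum_eq_zero fun ε _ => if_neg ?_
  intro hw
  have := walkFn_bound x ε
  rw [show walkFn x (extendF false ε) n = z from hw] at this
  omega

end basics

section series
variable {p : ℝ}

noncomputable def Fser (p : ℝ) (a b y x : ℤ) (n : ℕ) (l : ℤ) : ℝ :=
  (p/(1-p)) ^ (l*(b-a)) *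
    (gP p x n (y - 2*l*(b-a)) - (p/(1-p)) ^ (y - a) * gP p x n (2*a - 2*l*(b-a) - y))

lemma gP_small' (p : ℝ) (x c Δ : ℤ) (hΔ : 1 ≤ Δ) (n : ℕ) (l : ℤ)
    (hl : (n:ℤ) + |c - x| < |l|) : gP p x n (c - 2*l*Δ) = 0 := by
  apply gP_small
  have h1 : |2*l*Δ| = 2 * |l| * Δ := by
    rw [show (2:ℤ)*l*Δ = 2*(l*Δ) by ring, abs_mul, abs_mul, abs_two, abs_of_pos (by omega : (0:ℤ) < Δ)]
    ring
  have h2 : 2 * |l| ≤ 2 * |l| * Δ := le_mul_of_one_le_right (by positivity) hΔ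
  have h3 : |2*l*Δ| - |c - x| ≤ |(c - x) - 2*l*Δ| := by
    have h := abs_sub_abs_le_abs_sub (2*l*Δ) (c - x)
    rw [abs_sub_comm (2*l*Δ) (c - x)] at h
    linarith
  have h4 : c - 2*l*Δ - x = (c - x) - 2*l*Δ := by ring
  rw [h4]
  have h5 := abs_nonneg (c - x)
  have h6 := Int.natCast_nonneg n
  linarith

lemma Fser_support (a b y x : ℤ) (hab : a < b) (n : ℕ) (l : ℤ)
    (hl : (n:ℤ) + |y - x| + |2*a - y - x| < |l|) : Fser p a b y x n l = 0 := by
  unfold Fser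
  have hΔ : 1 ≤ b - a := by omega
  have h1 : gP p x n (y - 2*l*(b-a)) = 0 :=
    gP_small' p x y (b-a) hΔ n l (by have := abs_nonneg (2*a - y - x); linarith)
  have h2 : gP p x n (2*a - 2*l*(b-a) - y) = 0 := by
    have := gP_small' p x (2*a - y) (b-a) hΔ n l
      (by have := abs_nonneg (y - x); linarith)
    rw [show 2*a - y - 2*l*(b-a) = 2*a - 2*l*(b-a) - y by ring] at this
    exact this
  rw [h1, h2]
  simp

lemma summable_helper (f : ℤ → ℝ) (M : ℤ) (h : ∀ l : ℤ, M < |l| → f l = 0) :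
    Summable f := by
  apply summable_of_finite_support
  apply Set.Finite.subset (Set.finite_Icc (-M) M)
  intro l hl
  simp only [Function.mem_support] at hl
  by_contra hmem
  apply hl
  apply h
  simp only [Set.mem_Icc] at hmem
  rcases abs_cases l with ⟨h1, _⟩ | ⟨h1, _⟩ <;> omega

lemma Fser_summable (a b y x : ℤ) (hab : a < b) (n : ℕ) :
    Summable (Fser p a b y x n) :=
  summable_helper _ ((n:ℤ) + |y - x| + |2*a - y - x|)
    (fun l hl => Fser_support a b y x hab n l hl)

lemma Fser_rec (a b y x : ℤ) (hab : a < b) (n : ℕ) :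
    ∑' l : ℤ, Fser p a b y x (n+1) l
      = p * ∑' l : ℤ, Fser p a b y (x+1) n l + (1-p) * ∑' l : ℤ, Fser p a b y (x-1) n l := by
  have hpt : ∀ l : ℤ, Fser p a b y x (n+1) l
      = p * Fser p a b y (x+1) n l + (1-p) * Fser p a b y (x-1) n l := by
    intro l
    unfold Fser
    rw [gP_succ, gP_succ]
    ring
  rw [tsum_congr hpt,
    Summable.tsum_add ((Fser_summable a b y (x+1) hab n).mul_left p)
      ((Fser_summable a b y (x-1) hab n).mul_left (1-p)),
    tsum_mul_left, tsum_mul_left]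

lemma gterm_summable (a b : ℤ) (hab : a < b) (x c : ℤ) (n : ℕ) (w : ℤ → ℝ) :
    Summable (fun l : ℤ => w l * gP p x n (c - 2*l*(b-a))) := by
  apply summable_helper _ ((n:ℤ) + |c - x|)
  intro l hl
  rw [gP_small' p x c (b-a) (by omega) n l hl, mul_zero]

lemma Fser_bnd_a (hp0 : 0 < p) (hp1 : p < 1) (a b y : ℤ) (hab : a < b) (n : ℕ) :
    ∑' l : ℤ, Fser p a b y a n l = 0 := by
  have hq : (0:ℝ) < 1 - p := by linarith
  have hr : p / (1-p) ≠ 0 := by positivity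
  set r := p / (1-p) with hrdef
  have hA : Summable (fun l : ℤ => r ^ (l*(b-a)) * gP p a n (y - 2*l*(b-a))) :=
    gterm_summable a b hab a y n _
  have hB : Summable (fun l : ℤ => r ^ (l*(b-a)) * (r ^ (y - a) * gP p a n (2*a - 2*l*(b-a) - y))) := by
    have := gterm_summable (p := p) a b hab a (2*a - y) n (fun l => r ^ (l*(b-a)) * r ^ (y-a))
    apply Summable.congr this
    intro l
    rw [show 2*a - y - 2*l*(b-a) = 2*a - 2*l*(b-a) - y by ring, mul_assoc]
  have hsplit : ∀ l : ℤ, Fser p a b y a n l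
      = r ^ (l*(b-a)) * gP p a n (y - 2*l*(b-a))
        - r ^ (l*(b-a)) * (r ^ (y - a) * gP p a n (2*a - 2*l*(b-a) - y)) := by
    intro l; unfold Fser; rw [← hrdef]; ring
  rw [tsum_congr hsplit, Summable.tsum_sub hA hB]
  have hpt : ∀ l : ℤ, r ^ (l*(b-a)) * gP p a n (y - 2*l*(b-a))
      = r ^ ((-l)*(b-a)) * (r ^ (y - a) * gP p a n (2*a - 2*(-l)*(b-a) - y)) := by
    intro l
    rw [gP_reflect hp0 hp1 a (y - 2*l*(b-a)) n, ← hrdef]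
    rw [show 2*a - (y - 2*l*(b-a)) = 2*a - 2*(-l)*(b-a) - y by ring]
    rw [← mul_assoc, ← mul_assoc, ← zpow_add₀ hr, ← zpow_add₀ hr]
    rw [show l*(b-a) + (y - 2*l*(b-a) - a) = (-l)*(b-a) + (y - a) by ring]
  rw [tsum_congr hpt]
  rw [sub_eq_zero]
  exact (Equiv.neg ℤ).tsum_eq (fun l : ℤ => r ^ (l*(b-a)) * (r ^ (y - a) * gP p a n (2*a - 2*l*(b-a) - y)))

lemma Fser_bnd_b (hp0 : 0 < p) (hp1 : p < 1) (a b y : ℤ) (hab : a < b) (n : ℕ) :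
    ∑' l : ℤ, Fser p a b y b n l = 0 := by
  have hq : (0:ℝ) < 1 - p := by linarith
  have hr : p / (1-p) ≠ 0 := by positivity
  set r := p / (1-p) with hrdef
  have hA : Summable (fun l : ℤ => r ^ (l*(b-a)) * gP p b n (y - 2*l*(b-a))) :=
    gterm_summable a b hab b y n _
  have hB : Summable (fun l : ℤ => r ^ (l*(b-a)) * (r ^ (y - a) * gP p b n (2*a - 2*l*(b-a) - y))) := by
    have := gterm_summable (p := p) a b hab b (2*a - y) n (fun l => r ^ (l*(b-a)) * r ^ (y-a))
    apply Summable.congr this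
    intro l
    rw [show 2*a - y - 2*l*(b-a) = 2*a - 2*l*(b-a) - y by ring, mul_assoc]
  have hsplit : ∀ l : ℤ, Fser p a b y b n l
      = r ^ (l*(b-a)) * gP p b n (y - 2*l*(b-a))
        - r ^ (l*(b-a)) * (r ^ (y - a) * gP p b n (2*a - 2*l*(b-a) - y)) := by
    intro l; unfold Fser; rw [← hrdef]; ring
  rw [tsum_congr hsplit, Summable.tsum_sub hA hB]
  have hpt : ∀ l : ℤ, r ^ (l*(b-a)) * gP p b n (y - 2*l*(b-a))
      = r ^ ((-(l+1))*(b-a)) * (r ^ (y - a) * gP p b n (2*a - 2*(-(l+1))*(b-a) - y)) := by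
    intro l
    rw [gP_reflect hp0 hp1 b (y - 2*l*(b-a)) n, ← hrdef]
    rw [show 2*b - (y - 2*l*(b-a)) = 2*a - 2*(-(l+1))*(b-a) - y by ring]
    rw [← mul_assoc, ← mul_assoc, ← zpow_add₀ hr, ← zpow_add₀ hr]
    rw [show l*(b-a) + (y - 2*l*(b-a) - b) = (-(l+1))*(b-a) + (y - a) by ring]
  rw [tsum_congr hpt]
  rw [sub_eq_zero]
  exact (Function.Involutive.toPerm (fun l : ℤ => -(l+1)) (fun l => by ring)).tsum_eq
    (fun l : ℤ => r ^ (l*(b-a)) * (r ^ (y - a) * gP p b n (2*a - 2*l*(b-a) - y)))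

end series

section main
variable {p : ℝ}

lemma base_rhs (hp0 : 0 < p) (hp1 : p < 1) (a b y x : ℤ)
    (hax : a < x) (hxb : x < b) (hay : a < y) (hyb : y < b) :
    ∑' l : ℤ, Fser p a b y x 0 l = (if x = y then (1:ℝ) else 0) := by
  have hne2 : ∀ l : ℤ, x ≠ 2*a - 2*l*(b-a) - y := by
    intro l h
    rcases le_or_gt (-l) 0 with hm | hm
    · have h2 : (-l)*(b-a) ≤ 0 := mul_nonpos_of_nonpos_of_nonneg (by omega) (by omega)
      nlinarith
    · have h1 : 1 ≤ -l := hm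
      have h2 : (b-a) ≤ (-l)*(b-a) := le_mul_of_one_le_left (by omega) h1
      nlinarith
  have hzero : ∀ l : ℤ, l ≠ 0 → Fser p a b y x 0 l = 0 := by
    intro l hl
    have hne1 : x ≠ y - 2*l*(b-a) := by
      intro h
      rcases lt_or_gt_of_ne hl with hneg | hpos
      · have h1 : 1 ≤ -l := by omega
        have h2 : (b-a) ≤ (-l)*(b-a) := le_mul_of_one_le_left (by omega) h1
        nlinarith
      · have h1 : 1 ≤ l := hpos
        have h2 : (b-a) ≤ l*(b-a) := le_mul_of_one_le_left (by omega) h1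
        nlinarith
    unfold Fser
    rw [gP_zero, gP_zero, if_neg hne1, if_neg (hne2 l)]
    simp
  rw [tsum_eq_single 0 hzero]
  unfold Fser
  rw [gP_zero, gP_zero, if_neg (hne2 0)]
  rw [show y - 2*(0:ℤ)*(b-a) = y by ring, show ((0:ℤ)*(b-a)) = 0 by ring]
  simp

lemma base_lhs (p : ℝ) (a b y x : ℤ) :
    walkProb p x 0 (fun S => S 0 = y ∧ ∀ i, 1 ≤ i → i < 0 → S i ≠ a ∧ S i ≠ b)
      = (if x = y then (1:ℝ) else 0) := by
  unfold walkProb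
  rw [Fintype.sum_subsingleton _ (fun _ : Fin 0 => false)]
  simp [walkFn]

lemma main_lemma (hp0 : 0 < p) (hp1 : p < 1) (a b y : ℤ) (hab : a < b)
    (hay : a < y) (hyb : y < b) :
    ∀ (n : ℕ) (x : ℤ), a < x → x < b →
      walkProb p x n (fun S => S n = y ∧ ∀ i, 1 ≤ i → i < n → S i ≠ a ∧ S i ≠ b)
        = ∑' l : ℤ, Fser p a b y x n l := by
  intro n
  induction n with
  | zero =>
    intro x hax hxb
    rw [base_lhs, base_rhs hp0 hp1 a b y x hax hxb hay hyb]
  | succ n ih =>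
    intro x hax hxb
    rw [walkProb_succ p x n
      (fun S => S (n+1) = y ∧ ∀ i, 1 ≤ i → i < n+1 → S i ≠ a ∧ S i ≠ b)]
    have hshift : ∀ x' : ℤ,
        walkProb p x' n (fun S =>
          (fun S' : ℕ → ℤ => S' (n+1) = y ∧ ∀ i, 1 ≤ i → i < n+1 → S' i ≠ a ∧ S' i ≠ b)
            (fun i => if i = 0 then x else S (i-1)))
          = walkProb p x' n (fun S => S n = y ∧ ∀ i, i < n → S i ≠ a ∧ S i ≠ b) := by
      intro x'
      apply walkProb_congr
      intro ε
      constructor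
      · rintro ⟨h1, h2⟩
        refine ⟨by simpa using h1, fun i hi => ?_⟩
        have := h2 (i+1) (by omega) (by omega)
        simpa using this
      · rintro ⟨h1, h2⟩
        refine ⟨by simpa using h1, fun i h1i hin => ?_⟩
        have h := h2 (i-1) (by omega)
        show (if i = 0 then x else walkFn x' ε (i-1)) ≠ a ∧
          (if i = 0 then x else walkFn x' ε (i-1)) ≠ b
        rw [if_neg (by omega : ¬ i = 0)]
        exact h
    rw [hshift, hshift]
    have hBa : walkProb p a n (fun S => S n = y ∧ ∀ i, i < n → S i ≠ a ∧ S i ≠ b) = 0 := by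
      apply walkProb_zero_of
      rintro ε ⟨h1, h2⟩
      cases n with
      | zero => rw [walkFn_zero] at h1; omega
      | succ m => exact (h2 0 (by omega)).1 (walkFn_zero a _)
    have hBb : walkProb p b n (fun S => S n = y ∧ ∀ i, i < n → S i ≠ a ∧ S i ≠ b) = 0 := by
      apply walkProb_zero_of
      rintro ε ⟨h1, h2⟩
      cases n with
      | zero => rw [walkFn_zero] at h1; omega
      | succ m => exact (h2 0 (by omega)).2 (walkFn_zero b _)
    have hBmid : ∀ x' : ℤ, a < x' → x' < b →
        walkProb p x' n (fun S => S n = y ∧ ∀ i, i < n → S i ≠ a ∧ S i ≠ b)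
          = ∑' l : ℤ, Fser p a b y x' n l := by
      intro x' h1 h2
      rw [← ih x' h1 h2]
      apply walkProb_congr
      intro ε
      constructor
      · rintro ⟨ha1, ha2⟩
        exact ⟨ha1, fun i _ hi => ha2 i hi⟩
      · rintro ⟨ha1, ha2⟩
        refine ⟨ha1, fun i hi => ?_⟩
        rcases Nat.eq_zero_or_pos i with h0 | h0
        · subst h0
          rw [walkFn_zero]
          omega
        · exact ha2 i (by omega) hi
    have hx1 : walkProb p (x+1) n (fun S => S n = y ∧ ∀ i, i < n → S i ≠ a ∧ S i ≠ b)
        = ∑' l : ℤ, Fser p a b y (x+1) n l := by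
      by_cases hxe : x + 1 = b
      · rw [hxe, hBb, Fser_bnd_b hp0 hp1 a b y hab n]
      · exact hBmid (x+1) (by omega) (by omega)
    have hx0 : walkProb p (x-1) n (fun S => S n = y ∧ ∀ i, i < n → S i ≠ a ∧ S i ≠ b)
        = ∑' l : ℤ, Fser p a b y (x-1) n l := by
      by_cases hxe : x - 1 = a
      · rw [hxe, hBa, Fser_bnd_a hp0 hp1 a b y hab n]
      · exact hBmid (x-1) (by omega) (by omega)
    rw [hx1, hx0, ← Fser_rec a b y x hab n]

end main


/-- Image/reflection series for the two-sided absorbed walk: for `a < x, y < b`,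
`P_x{S(j)=y, j ≤ τ_{a,b}} = ∑_{l ∈ ℤ} (p/q)^{l(b-a)} [P_x{S(j)=y-2l(b-a)}
- (p/q)^{y-a} P_x{S(j)=2a-2l(b-a)-y}]`. -/
theorem stmt10 (p : ℝ) (hp : p ∈ Set.Ioo (0:ℝ) 1) (a b x y : ℤ)
    (hax : a < x) (hxb : x < b) (hay : a < y) (hyb : y < b) (j : ℕ) :
    walkProb p x j (fun S => S j = y ∧ ∀ i, 1 ≤ i → i < j → S i ≠ a ∧ S i ≠ b) =
      ∑' l : ℤ, (p/(1-p)) ^ (l*(b-a)) *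
        (walkProb p x j (fun S => S j = y - 2*l*(b-a)) -
          (p/(1-p)) ^ (y - a) *
            walkProb p x j (fun S => S j = 2*a - 2*l*(b-a) - y)) := by
  have h := main_lemma hp.1 hp.2 a b y (lt_trans hax hxb) hay hyb j x hax hxb
  simp only [Fser, gP] at h
  exact h
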